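/- The rate of the trimodal normal distribution is infinite: for the trimodal normal density f(·; θ), the limit τ = −lim_{x→∞} (d/dx) log f(x; θ) equals +∞; equivalently, (1/σ)·[ (x−μ)/σ − (2δ/(α·Γ(p)))·((x−μ)/(ασ))^{2p−1}·e^{−((x−μ)/(ασ))²}/(ρ + δ·T((x−μ)/σ; α, p)) ] → +∞ as x → ∞. Hence, far enough in the tail, the trimodal normal distribution has the same (infinite) rate as the normal distribution. -/

import Mathlib

open MeasureTheory Real Set Filter

noncomputable def lincGamma (p u : ℝ) : ℝ := ∫ w in (0:ℝ)..u, w ^ (p - 1) * Real.exp (-w)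

noncomputable def Tfun (p α x : ℝ) : ℝ := lincGamma p (x ^ 2 / α ^ 2) / Real.Gamma p

noncomputable def gammaPDF (p y : ℝ) : ℝ := y ^ (p - 1) * Real.exp (-y) / Real.Gamma p

noncomputable def Znorm (p σ α ρ δ : ℝ) (g : ℝ → ℝ) : ℝ :=
  σ * ∫ w : ℝ, (ρ + δ * Tfun p α w) * g w

noncomputable def tdPDF (p μ σ α ρ δ : ℝ) (g : ℝ → ℝ) (x : ℝ) : ℝ :=
  (1 / Znorm p σ α ρ δ g) * (ρ + δ * Tfun p α ((x - μ) / σ)) * g ((x - μ) / σ)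

noncomputable def cdfOf (d : ℝ → ℝ) (x : ℝ) : ℝ := ∫ t in Iic x, d t

noncomputable def normalPDF (x : ℝ) : ℝ := Real.exp (-x ^ 2 / 2) / Real.sqrt (2 * Real.pi)

/-! Far in the tail the weight `ρ + δ T((x - μ)/σ)` tends to `ρ + δ > 0`, while its derivative is a
multiple of `v ^ (2p - 1) e^(-v²)` with `v = (x - μ)/(ασ)`, which tends to `0`. Hence `-(log f)'`
differs from the Gaussian rate `(x - μ)/σ²` by a vanishing term and tends to `∞`. -/

lemma intervalIntegrable_rpow_mul_exp_neg {p : ℝ} (hp : 0 < p) (a b : ℝ) :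
    IntervalIntegrable (fun w : ℝ => w ^ (p - 1) * exp (-w)) volume a b :=
  (intervalIntegral.intervalIntegrable_rpow' (by linarith)).mul_continuousOn
    (continuous_exp.comp continuous_neg).continuousOn

lemma lincGamma_nonneg (p : ℝ) {t : ℝ} (ht : 0 ≤ t) : 0 ≤ lincGamma p t :=
  intervalIntegral.integral_nonneg ht fun _ hw =>
    mul_nonneg (rpow_nonneg hw.1 _) (exp_pos _).le

lemma lincGamma_pos {p t : ℝ} (hp : 0 < p) (ht : 0 < t) : 0 < lincGamma p t :=
  intervalIntegral.intervalIntegral_pos_of_pos_on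
    (intervalIntegrable_rpow_mul_exp_neg hp 0 t)
    (fun _ hw => mul_pos (rpow_pos_of_pos hw.1 _) (exp_pos _)) ht

lemma lincGamma_le_Gamma {p t : ℝ} (hp : 0 < p) (ht : 0 ≤ t) : lincGamma p t ≤ Gamma p := by
  rw [lincGamma, intervalIntegral.integral_of_le ht, Gamma_eq_integral hp]
  simp_rw [mul_comm _ (exp _)]
  refine setIntegral_mono_set (GammaIntegral_convergent hp) ?_ Ioc_subset_Ioi_self.eventuallyLE
  filter_upwards [self_mem_ae_restrict measurableSet_Ioi] with w hw
  exact mul_nonneg (exp_pos _).le (rpow_nonneg (le_of_lt hw) _)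

lemma continuous_lincGamma {p : ℝ} (hp : 0 < p) : Continuous (lincGamma p) :=
  intervalIntegral.continuous_primitive (intervalIntegrable_rpow_mul_exp_neg hp) 0

lemma tendsto_lincGamma_atTop {p : ℝ} (hp : 0 < p) :
    Tendsto (lincGamma p) atTop (nhds (Gamma p)) := by
  rw [Gamma_eq_integral hp]
  exact (intervalIntegral_tendsto_integral_Ioi 0 (GammaIntegral_convergent hp) tendsto_id).congr
    fun u => by simp only [lincGamma, id, mul_comm]

lemma hasDerivAt_lincGamma {p t : ℝ} (hp : 0 < p) (ht : 0 < t) :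
    HasDerivAt (lincGamma p) (t ^ (p - 1) * exp (-t)) t :=
  intervalIntegral.integral_hasDerivAt_right (intervalIntegrable_rpow_mul_exp_neg hp 0 t)
    (Measurable.stronglyMeasurable (by fun_prop)).stronglyMeasurableAtFilter
    ((continuousAt_rpow_const _ _ (Or.inl ht.ne')).mul (by fun_prop))

section Tfun

variable {p α : ℝ}

lemma Tfun_nonneg (hp : 0 < p) (x : ℝ) : 0 ≤ Tfun p α x :=
  div_nonneg (lincGamma_nonneg p (by positivity)) (Gamma_pos_of_pos hp).le

lemma Tfun_le_one (hp : 0 < p) (x : ℝ) : Tfun p α x ≤ 1 :=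
  div_le_one_of_le₀ (lincGamma_le_Gamma hp (by positivity)) (Gamma_pos_of_pos hp).le

lemma Tfun_pos (hp : 0 < p) (hα : α ≠ 0) {x : ℝ} (hx : x ≠ 0) : 0 < Tfun p α x :=
  div_pos (lincGamma_pos hp (by positivity)) (Gamma_pos_of_pos hp)

lemma continuous_Tfun (hp : 0 < p) : Continuous (Tfun p α) :=
  ((continuous_lincGamma hp).comp (by fun_prop)).div_const _

lemma tendsto_Tfun_atTop (hp : 0 < p) (hα : α ≠ 0) : Tendsto (Tfun p α) atTop (nhds 1) := by
  have harg : Tendsto (fun x : ℝ => x ^ 2 / α ^ 2) atTop atTop :=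
    (tendsto_pow_atTop two_ne_zero).atTop_div_const (by positivity)
  have h := ((tendsto_lincGamma_atTop hp).comp harg).div_const (Gamma p)
  rw [div_self (Gamma_pos_of_pos hp).ne'] at h
  exact h

lemma hasDerivAt_Tfun (hp : 0 < p) (hα : 0 < α) {u : ℝ} (hu : 0 < u) :
    HasDerivAt (Tfun p α)
      (2 / (α * Gamma p) * (u / α) ^ (2 * p - 1) * exp (-(u / α) ^ 2)) u := by
  have hv : 0 < u / α := div_pos hu hα
  have hsq : HasDerivAt (fun s : ℝ => s ^ 2 / α ^ 2) (2 * u / α ^ 2) u := by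
    simpa using (hasDerivAt_pow 2 u).div_const (α ^ 2)
  refine (((hasDerivAt_lincGamma hp (by positivity)).comp u hsq).div_const (Gamma p)).congr_deriv ?_
  -- `(v ^ 2) ^ (p - 1) * v = v ^ (2 * p - 1)` for `v = u / α`
  rw [← div_pow, ← rpow_natCast, ← rpow_mul hv.le, show (2 * p - 1) = (2 : ℕ) * (p - 1) + 1 by
    push_cast; ring, rpow_add hv, rpow_one]
  field_simp

end Tfun

lemma weight_pos {p α ρ δ : ℝ} (hp : 0 < p) (hα : α ≠ 0) (hρ : 0 ≤ ρ) (hδ : 0 ≤ δ)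
    (hρδ : 0 < ρ + δ) {x : ℝ} (hx : x ≠ 0) : 0 < ρ + δ * Tfun p α x := by
  rcases hρ.eq_or_lt with rfl | hρ
  · simpa using mul_pos (by linarith : 0 < δ) (Tfun_pos hp hα hx)
  · exact add_pos_of_pos_of_nonneg hρ (mul_nonneg hδ (Tfun_nonneg hp x))

lemma normalPDF_pos (x : ℝ) : 0 < normalPDF x :=
  div_pos (exp_pos _) (sqrt_pos.2 (by positivity))

lemma log_normalPDF (x : ℝ) : log (normalPDF x) = -x ^ 2 / 2 - log (sqrt (2 * π)) := by
  rw [normalPDF, log_div (exp_ne_zero _) (sqrt_pos.2 (by positivity)).ne', log_exp]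

lemma integrable_normalPDF : Integrable normalPDF := by
  convert (integrable_exp_neg_mul_sq (by norm_num : (0 : ℝ) < 1 / 2)).div_const (sqrt (2 * π))
    using 2 with x
  rw [normalPDF]
  ring_nf

lemma Znorm_normalPDF_pos {p σ α ρ δ : ℝ} (hp : 0 < p) (hσ : 0 < σ) (hα : α ≠ 0) (hρ : 0 ≤ ρ)
    (hδ : 0 ≤ δ) (hρδ : 0 < ρ + δ) : 0 < Znorm p σ α ρ δ normalPDF := by
  have hcont : Continuous fun w => ρ + δ * Tfun p α w := by
    have := continuous_Tfun (α := α) hp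
    fun_prop
  have hbound : ∀ w, ‖ρ + δ * Tfun p α w‖ ≤ ρ + δ := fun w => by
    rw [norm_of_nonneg (by nlinarith [Tfun_nonneg (α := α) hp w])]
    nlinarith [Tfun_le_one (α := α) hp w]
  have hint : Integrable fun w => (ρ + δ * Tfun p α w) * normalPDF w :=
    integrable_normalPDF.bdd_mul hcont.aestronglyMeasurable (.of_forall hbound)
  have hnn : 0 ≤ fun w => (ρ + δ * Tfun p α w) * normalPDF w := fun w =>
    mul_nonneg (by nlinarith [Tfun_nonneg (α := α) hp w]) (normalPDF_pos w).le
  -- the integrand is positive off the origin, so its support has infinite measure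
  have hsupp : Ioi 0 ⊆ Function.support fun w => (ρ + δ * Tfun p α w) * normalPDF w :=
    fun w hw => (mul_pos (weight_pos hp hα hρ hδ hρδ (ne_of_gt hw)) (normalPDF_pos w)).ne'
  refine mul_pos hσ ((integral_pos_iff_support_of_nonneg hnn hint).2 ?_)
  exact (measure_mono hsupp).trans_lt' (by simp)

lemma tendsto_rpow_mul_exp_neg_sq_atTop_nhds_zero (r : ℝ) :
    Tendsto (fun s : ℝ => s ^ r * exp (-s ^ 2)) atTop (nhds 0) := by
  refine ((tendsto_rpow_mul_exp_neg_mul_atTop_nhds_zero (r / 2) 1 one_pos).comp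
    (tendsto_pow_atTop two_ne_zero)).congr' ?_
  filter_upwards [eventually_ge_atTop 0] with s hs
  simp [← rpow_natCast_mul hs, mul_div_cancel₀ r two_ne_zero]

noncomputable def tdRate (p μ σ α ρ δ x : ℝ) : ℝ :=
  (1 / σ) * ((x - μ) / σ
    - (2 * δ / (α * Gamma p)) * ((x - μ) / (α * σ)) ^ (2 * p - 1)
        * exp (-((x - μ) / (α * σ)) ^ 2)
        / (ρ + δ * Tfun p α ((x - μ) / σ)))

section tdRate

variable {p μ σ α ρ δ : ℝ}

lemma tendsto_tdRate_atTop (hp : 0 < p) (hσ : 0 < σ) (hα : 0 < α) (hρδ : 0 < ρ + δ) :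
    Tendsto (tdRate p μ σ α ρ δ) atTop atTop := by
  have hshift : Tendsto (fun x : ℝ => x - μ) atTop atTop :=
    tendsto_atTop_add_const_right _ (-μ) tendsto_id
  have hu : Tendsto (fun x : ℝ => (x - μ) / σ) atTop atTop := hshift.atTop_div_const hσ
  have hweight : Tendsto (fun x => ρ + δ * Tfun p α ((x - μ) / σ)) atTop (nhds (ρ + δ)) := by
    simpa using (((tendsto_Tfun_atTop hp hα.ne').comp hu).const_mul δ).const_add ρ
  have hdecay : Tendsto (fun x => (2 * δ / (α * Gamma p)) * ((x - μ) / (α * σ)) ^ (2 * p - 1)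
      * exp (-((x - μ) / (α * σ)) ^ 2)) atTop (nhds 0) := by
    simpa [mul_assoc] using ((tendsto_rpow_mul_exp_neg_sq_atTop_nhds_zero (2 * p - 1)).comp
      (hshift.atTop_div_const (by positivity))).const_mul (2 * δ / (α * Gamma p))
  have hcorr := (hdecay.div hweight hρδ.ne').neg.add_atTop hu
  simp only [neg_add_eq_sub] at hcorr
  exact hcorr.const_mul_atTop (by positivity)

lemma neg_deriv_log_tdPDF (hp : 0 < p) (hσ : 0 < σ) (hα : 0 < α) (hρ : 0 ≤ ρ) (hδ : 0 ≤ δ)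
    (hρδ : 0 < ρ + δ) {x : ℝ} (hx : μ < x) :
    -deriv (fun y => log (tdPDF p μ σ α ρ δ normalPDF y)) x = tdRate p μ σ α ρ δ x := by
  set Z := Znorm p σ α ρ δ normalPDF
  have hZ : 1 / Z ≠ 0 := (one_div_pos.2 (Znorm_normalPDF_pos hp hσ hα.ne' hρ hδ hρδ)).ne'
  have hweight : ∀ y, μ < y → 0 < ρ + δ * Tfun p α ((y - μ) / σ) := fun y hy =>
    weight_pos hp hα.ne' hρ hδ hρδ (div_pos (sub_pos.2 hy) hσ).ne'
  have hlog : (fun y => log (tdPDF p μ σ α ρ δ normalPDF y)) =ᶠ[nhds x] fun y =>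
      log (1 / Z) + log (ρ + δ * Tfun p α ((y - μ) / σ))
        + (-((y - μ) / σ) ^ 2 / 2 - log (sqrt (2 * π))) := by
    filter_upwards [eventually_gt_nhds hx] with y hy
    rw [tdPDF, log_mul (mul_ne_zero hZ (hweight y hy).ne') (normalPDF_pos _).ne',
      log_mul hZ (hweight y hy).ne', log_normalPDF]
  have hu : HasDerivAt (fun y => (y - μ) / σ) (1 / σ) x := by
    simpa using ((hasDerivAt_id x).sub_const μ).div_const σ
  have hT := (hasDerivAt_Tfun hp hα (div_pos (sub_pos.2 hx) hσ)).comp x hu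
  have hderiv := (((hT.const_mul δ).const_add ρ).log (hweight x hx).ne').const_add (log (1 / Z))
    |>.add (((hu.pow 2).neg.div_const 2).sub_const (log (sqrt (2 * π))))
  rw [(hderiv.congr_of_eventuallyEq hlog).deriv, tdRate, mul_comm α σ, ← div_div (x - μ) σ α,
    Function.comp_apply]
  generalize (x - μ) / σ = u
  norm_num
  ring

end tdRate

/-- the rate of the trimodal normal distribution is infinite. -/
theorem stmt18 (p μ σ α ρ δ : ℝ) (hp : 0 < p) (hσ : 0 < σ) (hα : 0 < α)
    (hρ : 0 ≤ ρ) (hδ : 0 ≤ δ) (hρδ : 0 < ρ + δ) :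
    Tendsto (fun x : ℝ =>
        -(deriv (fun y : ℝ => Real.log (tdPDF p μ σ α ρ δ normalPDF y)) x))
      atTop atTop
    ∧ Tendsto (fun x : ℝ =>
        (1 / σ) * ((x - μ) / σ
          - (2 * δ / (α * Real.Gamma p)) * ((x - μ) / (α * σ)) ^ (2 * p - 1)
              * Real.exp (-((x - μ) / (α * σ)) ^ 2)
              / (ρ + δ * Tfun p α ((x - μ) / σ))))
      atTop atTop := by
  have hrate := tendsto_tdRate_atTop (μ := μ) hp hσ hα hρδ
  refine ⟨hrate.congr' ?_, hrate⟩
  filter_upwards [eventually_gt_atTop μ] with x hx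
  exact (neg_deriv_log_tdPDF hp hσ hα hρ hδ hρδ hx).symm
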